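/- Let A be a CIRL and A* its Galatos–Raftery double. Then A* satisfies the Nelson equation ((x² ⇒ y) ∧ ((¬y)² ⇒ ¬x)) ⇒ (x ⇒ y) = 1 for all x, y if and only if A is an implicative lattice (i.e., a ∧ b = a*b for all a,b, equivalently a² = a). -/

import Mathlib

/-- A commutative integral residuated lattice (CIRL): a lattice with maximum
element `1`, a commutative monoid structure with unit `1`, and a residuated
pair `(*, ⇨)`: `a * b ≤ c ↔ b ≤ a ⇨ c`. -/
class CIRL (α : Type*) extends Lattice α, CommMonoid α, HImp α where
  le_top : ∀ a : α, a ≤ 1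
  resid : ∀ a b c : α, a * b ≤ c ↔ b ≤ a ⇨ c

/-! The Galatos–Raftery doubling construction `A* = A ∪ ¬A`, encoded on `α ⊕ α`
where `.inr a` is the element `a ∈ A` and `.inl a` is its disjoint copy `¬a`. -/

variable {α : Type*} [CIRL α]

/-- The order on the double: it extends the order of `A`, puts every `¬a`
below every `b ∈ A`, and `¬a ≤ ¬b` iff `b ≤ a`. -/
def dle : α ⊕ α → α ⊕ α → Prop
  | .inr a, .inr b => a ≤ b
  | .inl _, .inr _ => True
  | .inr _, .inl _ => False
  | .inl a, .inl b => b ≤ a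

/-- Join on the double (lattice operations extended via De Morgan laws). -/
def dsup : α ⊕ α → α ⊕ α → α ⊕ α
  | .inr a, .inr b => .inr (a ⊔ b)
  | .inl _, .inr b => .inr b
  | .inr a, .inl _ => .inr a
  | .inl a, .inl b => .inl (a ⊓ b)

/-- Meet on the double (lattice operations extended via De Morgan laws). -/
def dinf : α ⊕ α → α ⊕ α → α ⊕ α
  | .inr a, .inr b => .inr (a ⊓ b)
  | .inl a, .inr _ => .inl a
  | .inr _, .inl b => .inl b
  | .inl a, .inl b => .inl (a ⊔ b)

/-- Monoid operation on the double: `a * ¬b := ¬(a ⇨ b)`, `¬a * ¬b := ¬1`. -/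
def dmul : α ⊕ α → α ⊕ α → α ⊕ α
  | .inr a, .inr b => .inr (a * b)
  | .inr a, .inl b => .inl (a ⇨ b)
  | .inl a, .inr b => .inl (b ⇨ a)
  | .inl _, .inl _ => .inl 1

/-- Implication on the double: `a ⇨ ¬b := ¬(a*b)`, `¬a ⇨ ¬b := b ⇨ a`,
`¬a ⇨ b := 1`. -/
def dimp : α ⊕ α → α ⊕ α → α ⊕ α
  | .inr a, .inr b => .inr (a ⇨ b)
  | .inr a, .inl b => .inl (a * b)
  | .inl _, .inr _ => .inr 1
  | .inl a, .inl b => .inr (b ⇨ a)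

/-- Top element `1` of the double. -/
def done : α ⊕ α := .inr 1

/-- Bottom element `0 := ¬1` of the double. -/
def dzero : α ⊕ α := .inl 1

/-- Negation `¬x := x ⇨ 0` on the double. -/
def dneg (x : α ⊕ α) : α ⊕ α := dimp x dzero

/-!
Both sides say that `*` is idempotent: in a CIRL `a * b` is a lower bound of `a` and `b`, and it
is the greatest one iff `a * a = a`. The Nelson equation at `x = c`, `y = c²` collapses to
`c ⇒ c² = 1`, i.e. `c ≤ c²`. Conversely, for idempotent `*` each of the four cases
`x, y ∈ A ∪ ¬A` reduces to `s ⇒ t = 1` with `s ≤ t` evident.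
-/

namespace CIRL

variable {α : Type*} [CIRL α]

protected theorem le_himp_iff {a b c : α} : b ≤ a ⇨ c ↔ a * b ≤ c := (resid a b c).symm

protected theorem mul_himp_le (a b : α) : a * (a ⇨ b) ≤ b := CIRL.le_himp_iff.mp le_rfl

protected theorem mul_le_mul_left (a : α) {b c : α} (h : b ≤ c) : a * b ≤ a * c :=
  CIRL.le_himp_iff.mp (h.trans (CIRL.le_himp_iff.mpr le_rfl))

protected theorem mul_le_left (a b : α) : a * b ≤ a := by
  simpa using CIRL.mul_le_mul_left a (CIRL.le_top b)

protected theorem mul_le_right (a b : α) : a * b ≤ b := mul_comm b a ▸ CIRL.mul_le_left b a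

protected theorem himp_eq_one_iff {a b : α} : a ⇨ b = 1 ↔ a ≤ b := by
  rw [← (CIRL.le_top (a ⇨ b)).ge_iff_eq, CIRL.le_himp_iff, mul_one]

@[simp]
protected theorem one_himp (a : α) : 1 ⇨ a = a :=
  le_antisymm (by simpa using CIRL.mul_himp_le 1 a) (CIRL.le_himp_iff.mpr (one_mul a).le)

@[simp]
protected theorem himp_one (a : α) : a ⇨ 1 = 1 := CIRL.himp_eq_one_iff.mpr (CIRL.le_top a)

@[simp]
protected theorem himp_self (a : α) : a ⇨ a = 1 := CIRL.himp_eq_one_iff.mpr le_rfl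

theorem inf_eq_mul_iff_mul_self :
    (∀ a b : α, a ⊓ b = a * b) ↔ ∀ a : α, a * a = a := by
  refine ⟨fun h a => (h a a).symm.trans (inf_idem a), fun h a b => ?_⟩
  refine le_antisymm ?_ (le_inf (CIRL.mul_le_left a b) (CIRL.mul_le_right a b))
  calc a ⊓ b = (a ⊓ b) * (a ⊓ b) := (h _).symm
    _ ≤ a * (a ⊓ b) := mul_comm (a ⊓ b) a ▸ CIRL.mul_le_mul_left _ inf_le_left
    _ ≤ a * b := CIRL.mul_le_mul_left _ inf_le_right

end CIRL

section Nelson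

variable {α : Type*} [CIRL α]

/-- The left-hand side of the Nelson equation `((x² ⇒ y) ∧ ((¬y)² ⇒ ¬x)) ⇒ (x ⇒ y) = 1`. -/
def nelson (x y : α ⊕ α) : α ⊕ α :=
  dimp (dinf (dimp (dmul x x) y) (dimp (dmul (dneg y) (dneg y)) (dneg x))) (dimp x y)

theorem nelson_inr_inr_mul_self (c : α) :
    nelson (.inr c) (.inr (c * c)) = .inr (c ⇨ c * c) := by
  simp [nelson, dmul, dneg, dzero, dimp, dinf]

theorem le_mul_self_of_nelson (h : ∀ x y : α ⊕ α, nelson x y = done) (c : α) : c ≤ c * c := by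
  have := h (.inr c) (.inr (c * c))
  rw [nelson_inr_inr_mul_self, done, Sum.inr.injEq] at this
  exact CIRL.himp_eq_one_iff.mp this

theorem nelson_eq_done_of_mul_self (h : ∀ a : α, a * a = a) (x y : α ⊕ α) :
    nelson x y = done := by
  cases x <;> cases y <;>
    simp [nelson, dmul, dneg, dzero, dimp, dinf, done, h, CIRL.himp_eq_one_iff]

end Nelson

/-- The double `A*` satisfies the Nelson equation
`((x² ⇒ y) ∧ ((¬y)² ⇒ ¬x)) ⇒ (x ⇒ y) = 1` iff `A` is an implicative lattice
(i.e. `a ∧ b = a * b` for all `a, b`). -/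
theorem stmt18 {α : Type*} [CIRL α] :
    (∀ x y : α ⊕ α,
        dimp (dinf (dimp (dmul x x) y) (dimp (dmul (dneg y) (dneg y)) (dneg x)))
          (dimp x y) = done) ↔
      (∀ a b : α, a ⊓ b = a * b) := by
  rw [CIRL.inf_eq_mul_iff_mul_self]
  refine ⟨fun h a => le_antisymm (CIRL.mul_le_left a a) (le_mul_self_of_nelson h a),
    nelson_eq_done_of_mul_self⟩
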